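/- arXiv:1703.03744 — 6 statements merged into one kernel-verified Lean document; each statement's English description precedes it below -/
import Mathlib

section
/- If L is a locked subset of a 2-connected matroid M on ground set E, then L is a closed (flat) set in M and E\L is a closed set in the dual matroid M*. -/
open Set Matroid

variable {α : Type*}

/-- The (ℕ-valued) rank of a set in a matroid: the largest cardinality of an
independent subset. -/
noncomputable def Matroid.rnk (M : Matroid α) (X : Set α) : ℕ :=
  sSup (Set.ncard '' {I | M.Indep I ∧ I ⊆ X})

/-- `C` is a circuit of `M`: a minimal dependent set. -/
def Matroid.IsCircuitSet (M : Matroid α) (C : Set α) : Prop :=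
  C ⊆ M.E ∧ ¬ M.Indep C ∧ ∀ x ∈ C, M.Indep (C \ {x})

/-- A matroid is 2-connected (connected in Oxley's sense) if it is nonempty and
every two distinct elements of the ground set lie on a common circuit. -/
def Matroid.TwoConnected (M : Matroid α) : Prop :=
  M.E.Nonempty ∧ ∀ e ∈ M.E, ∀ f ∈ M.E, e ≠ f →
    ∃ C, M.IsCircuitSet C ∧ e ∈ C ∧ f ∈ C

/-- `L` is locked in `M` if `M|L` and `M✶|(E\L)` are 2-connected and both
`r(L)` and `r✶(E\L)` are at least `2`. -/
def Matroid.Locked (M : Matroid α) (L : Set α) : Prop :=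
  L ⊂ M.E ∧ (M ↾ L).TwoConnected ∧ (M✶ ↾ (M.E \ L)).TwoConnected ∧
    2 ≤ M.rnk L ∧ 2 ≤ M✶.rnk (M.E \ L)

/-! If `e ∈ cl(L) \ L`, connectivity of `M✶|(E \ L)` with `|E \ L| ≥ 2` puts `e` in a cocircuit
`K ⊆ E \ L`, while a circuit witnessing `e ∈ cl(L)` lies in `L ∪ {e}` and so meets `K` in exactly
`e`; a circuit and a cocircuit never meet in a single element. Since `M✶✶ = M`, the same argument
applied to `M✶` and `E \ L` shows that `E \ L` is a flat of `M✶`. -/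

namespace Matroid

variable {M : Matroid α} {C K L X : Set α} {e : α}

lemma isCircuitSet_iff_isCircuit : M.IsCircuitSet C ↔ M.IsCircuit C := by
  rw [isCircuit_iff_dep_forall_sdiff_singleton_indep, Dep, IsCircuitSet]
  tauto

lemma nontrivial_of_two_le_rnk (h : 2 ≤ M.rnk X) : X.Nontrivial := by
  by_contra hX
  have hbound : M.rnk X ≤ 1 := by
    refine csSup_le' ?_
    rintro _ ⟨I, ⟨-, hIX⟩, rfl⟩
    have hI : I.Subsingleton := (not_nontrivial_iff.1 hX).anti hIX
    exact (ncard_le_one hI.finite).2 fun _ ha _ hb ↦ hI ha hb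
  omega

lemma TwoConnected.exists_isCircuit_mem (hM : M.TwoConnected) (he : e ∈ M.E)
    (hE : M.E.Nontrivial) : ∃ C, M.IsCircuit C ∧ e ∈ C := by
  obtain ⟨f, hf, hfe⟩ := hE.exists_ne e
  obtain ⟨C, hC, heC, -⟩ := hM.2 e he f hf hfe.symm
  exact ⟨C, isCircuitSet_iff_isCircuit.1 hC, heC⟩

lemma IsCocircuit.notMem_closure_of_disjoint (hK : M.IsCocircuit K) (heK : e ∈ K)
    (hXK : Disjoint X K) : e ∉ M.closure X := by
  intro he
  obtain ⟨C, hCX, hC, heC⟩ := exists_isCircuit_of_mem_closure he (hXK.notMem_of_mem_right heK)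
  refine hC.inter_isCocircuit_ne_singleton hK (e := e) <|
    subset_antisymm ?_ (by simpa using ⟨heC, heK⟩)
  rintro x ⟨hxC, hxK⟩
  obtain rfl | hxX := hCX hxC
  · rfl
  · exact absurd hxK (hXK.notMem_of_mem_left hxX)

lemma isFlat_of_twoConnected_dual_restrict_compl (hL : L ⊆ M.E)
    (hconn : (M✶ ↾ (M.E \ L)).TwoConnected) (hnt : (M.E \ L).Nontrivial) : M.IsFlat L := by
  refine isFlat_iff_closure_eq.2 (subset_antisymm (fun e he ↦ ?_) (M.subset_closure L hL))
  by_contra heL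
  obtain ⟨K, hK, heK⟩ := hconn.exists_isCircuit_mem ⟨M.closure_subset_ground L he, heL⟩ hnt
  rw [restrict_isCircuit_iff (M := M✶) (R := M.E \ L) sdiff_subset] at hK
  exact IsCocircuit.notMem_closure_of_disjoint hK.1 heK (disjoint_sdiff_right.mono_right hK.2) he

end Matroid

theorem locked_flat_general (M : Matroid α) (L : Set α)
    (hL : M.Locked L) : M.IsFlat L ∧ M✶.IsFlat (M.E \ L) := by
  obtain ⟨hLE, hconn, hconn', hr, hr'⟩ := hL
  refine ⟨isFlat_of_twoConnected_dual_restrict_compl hLE.subset hconn'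
    (nontrivial_of_two_le_rnk hr'), ?_⟩
  apply isFlat_of_twoConnected_dual_restrict_compl sdiff_subset <;>
    rw [dual_ground, sdiff_sdiff_cancel_left hLE.subset]
  · rwa [dual_dual]
  · exact nontrivial_of_two_le_rnk hr

/-- If `L` is locked in a 2-connected matroid `M`, then `L` is a flat of `M`
and `E \ L` is a flat of the dual `M✶`. -/
theorem locked_flat (M : Matroid α) (hM : M.TwoConnected) (L : Set α)
    (hL : M.Locked L) : M.IsFlat L ∧ M✶.IsFlat (M.E \ L) :=
  locked_flat_general M L hL
end

section
/- Every point x of the polytope P(M) satisfies 0 ≤ x(e) ≤ 1 for every element e of E. -/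
open Finset

variable {α : Type*} [Fintype α] [DecidableEq α]

/-- A family of subsets is a partition of the ground set `E = univ`. -/
def IsPartitionFam (C : Finset (Finset α)) : Prop :=
  (∀ A ∈ C, A.Nonempty) ∧ ∀ e : α, ∃! A, A ∈ C ∧ e ∈ A

/-- The downward decomposition property: `X` verifies (P1) or (P2) of
axiom (L17). -/
inductive DecompDown (P L : Finset (Finset α)) (r : Finset α → ℕ) :
    Finset α → Prop
  | empty : DecompDown P L r ∅
  | viaLocked (X l : Finset α) : l ∈ L → l ⊂ X → r X = r l + r (X \ l) →
      DecompDown P L r (X \ l) → DecompDown P L r X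
  | viaParallel (X p : Finset α) : p ∈ P → (p ∩ X).Nonempty →
      r X = r p + r (X \ p) → DecompDown P L r (X \ p) → DecompDown P L r X

/-- The upward decomposition property: `X` verifies (P3) or (P4) of
axiom (L17). -/
inductive DecompUp (S L : Finset (Finset α)) (r : Finset α → ℕ) :
    Finset α → Prop
  | full : DecompUp S L r Finset.univ
  | viaLocked (X l : Finset α) : l ∈ L → X ⊂ l →
      r X + r Finset.univ = r l + r (X ∪ (Finset.univ \ l)) →
      DecompUp S L r (X ∪ (Finset.univ \ l)) → DecompUp S L r X
  | viaSeries (X s : Finset α) : s ∈ S → (Finset.univ \ s) ∪ X ≠ Finset.univ →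
      r X + r Finset.univ = r (Finset.univ \ s) + r (X ∪ s) + (s ∩ X).card →
      DecompUp S L r (X ∪ s) → DecompUp S L r X

/-- A locked system `M = (E, 𝒫, 𝒮, ℒ, r)` on the ground set `E = univ`,
satisfying Chaourar's locked axioms (L1)–(L19), with (L8)–(L11) taken in the
equivalent strengthened forms (LL8)–(LL11). -/
structure LockedSystem (α : Type*) [Fintype α] [DecidableEq α] where
  P : Finset (Finset α)
  S : Finset (Finset α)
  L : Finset (Finset α)
  r : Finset α → ℕ
  ax1 : (Finset.univ : Finset α).Nonempty
  ax2P : IsPartitionFam P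
  ax2S : IsPartitionFam S
  ax3 : ∀ p ∈ P, ∀ s ∈ S, (p ∩ s).Nonempty → p.card = 1 ∨ s.card = 1
  ax4 : ∀ l ∈ L, l.Nonempty ∧ l ≠ Finset.univ ∧ l ∉ P ∧ l ∉ S
  ax5 : ∀ X ∈ P ∪ S, ∀ l ∈ L, X ∩ l = ∅ ∨ X ⊆ l
  ax7 : r ∅ = 0 ∧ ∀ X, r X ≤ r Finset.univ
  ax8 : ∀ p ∈ P, r p = 1
  ax9 : ∀ p ∈ P, r (Finset.univ \ p) = r Finset.univ
  ax10 : ∀ s ∈ S, r s = s.card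
  ax11 : ∀ s ∈ S, r (Finset.univ \ s) + s.card = r Finset.univ + 1
  ax12 : ∀ l ∈ L, 2 ≤ r l ∧ r Finset.univ + 2 ≤ r l + (Finset.univ \ l).card
  ax13 : ∀ X ∈ P ∪ L ∪ {∅, Finset.univ}, ∀ Y ∈ P ∪ L ∪ {∅, Finset.univ},
      X ⊂ Y → r X < r Y
  ax14 : ∀ X ∈ P ∪ S ∪ L ∪ {∅, Finset.univ},
      ∀ Y ∈ P ∪ S ∪ L ∪ {∅, Finset.univ},
      r (X ∩ Y) + r (X ∪ Y) ≤ r X + r Y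
  ax15 : ∀ l ∈ L, ∀ X Y : Finset α, l = X ∪ Y → X ∩ Y = ∅ → X.Nonempty →
      Y.Nonempty → r l < r X + r Y
  ax16 : ∀ l ∈ L, ∀ X Y : Finset α, l = X ∩ Y → X ∪ Y = Finset.univ →
      X ≠ Finset.univ → Y ≠ Finset.univ → r l + r Finset.univ < r X + r Y
  ax17 : ∀ X : Finset α, X ∉ P → X ∉ S → X ∉ L → X ≠ ∅ → X ≠ Finset.univ →
      DecompDown P L r X ∨ DecompUp S L r X
  ax18 : ∀ l1 ∈ L, ∀ l2 ∈ L, (l1 ∩ l2).Nonempty → l1 ∩ l2 ∉ L →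
      DecompDown P L r (l1 ∩ l2)
  ax19 : ∀ l1 ∈ L, ∀ l2 ∈ L, l1 ∪ l2 ≠ Finset.univ → l1 ∪ l2 ∉ L →
      DecompUp S L r (l1 ∪ l2)

namespace LockedSystem

/-- The polytope `P(M)` of a locked system `M`, defined by `x(E) = r(E)`,
`x(P) ≤ 1` for `P ∈ 𝒫`, `x(S) ≥ |S| − 1` for `S ∈ 𝒮`, and `x(L) ≤ r(L)`
for `L ∈ ℒ`. -/
def polytope (M : LockedSystem α) : Set (α → ℝ) :=
  {x | (∑ e, x e) = M.r Finset.univ ∧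
    (∀ p ∈ M.P, ∑ e ∈ p, x e ≤ 1) ∧
    (∀ s ∈ M.S, (s.card : ℝ) - 1 ≤ ∑ e ∈ s, x e) ∧
    (∀ l ∈ M.L, ∑ e ∈ l, x e ≤ M.r l)}

end LockedSystem

/-- Every point of the polytope `P(M)` of a locked system satisfies
`0 ≤ x(e) ≤ 1` for every element `e`. -/
theorem polytope_coord_bounds (M : LockedSystem α) (x : α → ℝ)
    (hx : x ∈ M.polytope) : ∀ e : α, 0 ≤ x e ∧ x e ≤ 1 := by
  obtain ⟨hE, hP1, hS1, hL⟩ := hx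
  have hsP : ∀ f : α, {f} ∈ M.P → x f ≤ 1 := by
    intro f hf
    have := hP1 {f} hf
    simpa using this
  have hsS : ∀ f : α, {f} ∈ M.S → 0 ≤ x f := by
    intro f hf
    have := hS1 {f} hf
    simpa using this
  have hub : ∀ f : α, x f ≤ 1 := by
    intro f
    obtain ⟨p, ⟨hp, hfp⟩, _⟩ := M.ax2P.2 f
    by_cases hcard : p.card = 1
    · obtain ⟨a, ha⟩ := Finset.card_eq_one.mp hcard
      subst ha
      have hfa : f = a := by simpa using hfp
      subst hfa
      exact hsP f hp
    · have hge : ∀ g ∈ p, 0 ≤ x g := by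
        intro g hg
        obtain ⟨s, ⟨hs, hgs⟩, _⟩ := M.ax2S.2 g
        rcases M.ax3 p hp s hs ⟨g, Finset.mem_inter.mpr ⟨hg, hgs⟩⟩ with h | h
        · exact absurd h hcard
        · obtain ⟨a, ha⟩ := Finset.card_eq_one.mp h
          subst ha
          have hga : g = a := by simpa using hgs
          subst hga
          exact hsS g hs
      have hsum := hP1 p hp
      have hsplit : x f + ∑ e ∈ p.erase f, x e = ∑ e ∈ p, x e :=
        Finset.add_sum_erase p x hfp
      have h0 : 0 ≤ ∑ e ∈ p.erase f, x e :=
        Finset.sum_nonneg fun g hg => hge g (Finset.mem_of_mem_erase hg)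
      linarith
  have hlb : ∀ f : α, 0 ≤ x f := by
    intro f
    obtain ⟨s, ⟨hs, hfs⟩, _⟩ := M.ax2S.2 f
    by_cases hcard : s.card = 1
    · obtain ⟨a, ha⟩ := Finset.card_eq_one.mp hcard
      subst ha
      have hfa : f = a := by simpa using hfs
      subst hfa
      exact hsS f hs
    · have hle : ∀ g ∈ s, x g ≤ 1 := by
        intro g hg
        obtain ⟨p, ⟨hp, hgp⟩, _⟩ := M.ax2P.2 g
        rcases M.ax3 p hp s hs ⟨g, Finset.mem_inter.mpr ⟨hgp, hg⟩⟩ with h | h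
        · obtain ⟨a, ha⟩ := Finset.card_eq_one.mp h
          subst ha
          have hga : g = a := by simpa using hgp
          subst hga
          exact hsP g hp
        · exact absurd h hcard
      have hsum := hS1 s hs
      have hsplit : x f + ∑ e ∈ s.erase f, x e = ∑ e ∈ s, x e :=
        Finset.add_sum_erase s x hfs
      have hbound : ∑ e ∈ s.erase f, x e ≤ ((s.erase f).card : ℝ) := by
        calc ∑ e ∈ s.erase f, x e ≤ ∑ _e ∈ s.erase f, (1 : ℝ) :=
              Finset.sum_le_sum fun g hg => hle g (Finset.mem_of_mem_erase hg)
          _ = ((s.erase f).card : ℝ) := by simp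
      have hcardR : ((s.erase f).card : ℝ) = (s.card : ℝ) - 1 :=
        Finset.cast_card_erase_of_mem hfs
      linarith
  exact fun e => ⟨hlb e, hub e⟩
end

section
/- Every point x of the polytope P(M) of a locked system M satisfies x(A) ≤ r(A) for every subset A ⊆ E. -/
open Finset

variable {α : Type*} [Fintype α] [DecidableEq α]

section Aux

variable (M : LockedSystem α) (x : α → ℝ)

lemma aux_elem_nonneg (hx : x ∈ M.polytope) (e : α) (p : Finset α)
    (hp : p ∈ M.P) (hep : e ∈ p) (h2 : 2 ≤ p.card) : 0 ≤ x e := by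
  obtain ⟨s, ⟨hs, hes⟩, -⟩ := M.ax2S.2 e
  have hint : (p ∩ s).Nonempty := ⟨e, Finset.mem_inter.mpr ⟨hep, hes⟩⟩
  rcases M.ax3 p hp s hs hint with h1 | h1
  · omega
  · obtain ⟨a, ha⟩ := Finset.card_eq_one.mp h1
    have hea : e = a := by
      have := hes
      rw [ha] at this
      simpa using this
    have := hx.2.2.1 s hs
    rw [ha, ← hea] at this
    simpa using this

lemma aux_elem_le_one (hx : x ∈ M.polytope) (e : α) : x e ≤ 1 := by
  obtain ⟨p, ⟨hp, hep⟩, -⟩ := M.ax2P.2 e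
  have hple := hx.2.1 p hp
  have hcard : 1 ≤ p.card := Finset.card_pos.mpr ⟨e, hep⟩
  rcases eq_or_lt_of_le hcard with h1 | h2
  · obtain ⟨a, ha⟩ := Finset.card_eq_one.mp h1.symm
    have hea : e = a := by
      have := hep; rw [ha] at this; simpa using this
    rw [ha, ← hea] at hple
    simpa using hple
  · have hsingle : x e ≤ ∑ f ∈ p, x f :=
      Finset.single_le_sum (fun f hf => aux_elem_nonneg M x hx f p hp hf h2) hep
    linarith

lemma aux_sum_le_card (hx : x ∈ M.polytope) (B : Finset α) :
    ∑ e ∈ B, x e ≤ (B.card : ℝ) := by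
  calc ∑ e ∈ B, x e ≤ ∑ _e ∈ B, (1 : ℝ) :=
        Finset.sum_le_sum (fun e _ => aux_elem_le_one M x hx e)
    _ = B.card := by simp

lemma aux_subset_parallel (hx : x ∈ M.polytope) (A p : Finset α)
    (hp : p ∈ M.P) (hAp : A ⊆ p) : ∑ e ∈ A, x e ≤ 1 := by
  rcases eq_or_lt_of_le (Finset.card_le_card hAp) with h1 | h2
  · have : A = p := Finset.eq_of_subset_of_card_le hAp (le_of_eq h1.symm)
    rw [this]; exact hx.2.1 p hp
  · rcases A.eq_empty_or_nonempty with hA | hA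
    · simp [hA]
    · have hcard : 2 ≤ p.card := by
        have : 1 ≤ A.card := Finset.card_pos.mpr hA
        omega
      have hsub : ∑ e ∈ A, x e ≤ ∑ e ∈ p, x e :=
        Finset.sum_le_sum_of_subset_of_nonneg hAp
          (fun f hf _ => aux_elem_nonneg M x hx f p hp hf hcard)
      linarith [hx.2.1 p hp]

lemma aux_down (hx : x ∈ M.polytope) (X : Finset α)
    (hX : DecompDown M.P M.L M.r X) : ∑ e ∈ X, x e ≤ (M.r X : ℝ) := by
  induction hX with
  | empty => simp [M.ax7.1]
  | viaLocked X l hl hlX hr _ ih =>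
    have hsplit : (∑ e ∈ X \ l, x e) + ∑ e ∈ l, x e = ∑ e ∈ X, x e :=
      Finset.sum_sdiff hlX.subset
    have hlb := hx.2.2.2 l hl
    have hrr : (M.r X : ℝ) = M.r l + M.r (X \ l) := by
      have := congrArg (Nat.cast (R := ℝ)) hr; push_cast at this; linarith
    linarith
  | viaParallel X p hp hne hr _ ih =>
    have hsplit : (∑ e ∈ X ∩ p, x e) + ∑ e ∈ X \ p, x e = ∑ e ∈ X, x e :=
      Finset.sum_inter_add_sum_sdiff X p x
    have hpar : ∑ e ∈ X ∩ p, x e ≤ 1 :=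
      aux_subset_parallel M x hx (X ∩ p) p hp Finset.inter_subset_right
    have hrp : M.r p = 1 := M.ax8 p hp
    have hrr : (M.r X : ℝ) = M.r p + M.r (X \ p) := by
      have := congrArg (Nat.cast (R := ℝ)) hr; push_cast at this; linarith
    rw [hrp] at hrr
    push_cast at hrr
    linarith

lemma aux_up (hx : x ∈ M.polytope) (X : Finset α)
    (hX : DecompUp M.S M.L M.r X) : ∑ e ∈ X, x e ≤ (M.r X : ℝ) := by
  induction hX with
  | full => exact le_of_eq hx.1
  | viaLocked X l hl hXl hr _ ih =>
    have hdisj : Disjoint X (Finset.univ \ l) := by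
      exact Finset.disjoint_sdiff.mono_left hXl.subset
    have hsplit : ∑ e ∈ X ∪ (Finset.univ \ l), x e
        = (∑ e ∈ X, x e) + ∑ e ∈ Finset.univ \ l, x e :=
      Finset.sum_union hdisj
    have hcompl : (∑ e ∈ Finset.univ \ l, x e) + ∑ e ∈ l, x e = ∑ e, x e :=
      Finset.sum_sdiff (Finset.subset_univ l)
    have hlb := hx.2.2.2 l hl
    have hE := hx.1
    have hrr : (M.r X : ℝ) + M.r Finset.univ
        = M.r l + M.r (X ∪ (Finset.univ \ l)) := by
      have := congrArg (Nat.cast (R := ℝ)) hr; push_cast at this; linarith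
    linarith
  | viaSeries X s hs hne hr _ ih =>
    have hdisj : Disjoint X (s \ X) := Finset.disjoint_sdiff
    have huni : X ∪ (s \ X) = X ∪ s := Finset.union_sdiff_self_eq_union
    have hsplit : ∑ e ∈ X ∪ s, x e = (∑ e ∈ X, x e) + ∑ e ∈ s \ X, x e := by
      rw [← huni]; exact Finset.sum_union hdisj
    have hs2 : (∑ e ∈ s ∩ X, x e) + ∑ e ∈ s \ X, x e = ∑ e ∈ s, x e :=
      Finset.sum_inter_add_sum_sdiff s X x
    have hslow := hx.2.2.1 s hs
    have hcap : ∑ e ∈ s ∩ X, x e ≤ ((s ∩ X).card : ℝ) :=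
      aux_sum_le_card M x hx (s ∩ X)
    have h11 : (M.r (Finset.univ \ s) : ℝ) + s.card = M.r Finset.univ + 1 := by
      exact_mod_cast congrArg (Nat.cast (R := ℝ)) (M.ax11 s hs)
    have hrr : (M.r X : ℝ) + M.r Finset.univ
        = M.r (Finset.univ \ s) + M.r (X ∪ s) + (s ∩ X).card := by
      exact_mod_cast congrArg (Nat.cast (R := ℝ)) hr
    linarith

end Aux

/-- Every point of the polytope `P(M)` of a locked system satisfies
`x(A) ≤ r(A)` for every subset `A` of the ground set. -/
theorem polytope_rank_bound (M : LockedSystem α) (x : α → ℝ)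
    (hx : x ∈ M.polytope) : ∀ A : Finset α, ∑ e ∈ A, x e ≤ M.r A := by
  intro A
  by_cases hP : A ∈ M.P
  · rw [M.ax8 A hP]
    exact_mod_cast hx.2.1 A hP
  by_cases hS : A ∈ M.S
  · rw [M.ax10 A hS]
    exact_mod_cast aux_sum_le_card M x hx A
  by_cases hL : A ∈ M.L
  · exact hx.2.2.2 A hL
  by_cases hE : A = ∅
  · simp [hE, M.ax7.1]
  by_cases hU : A = Finset.univ
  · rw [hU]; exact le_of_eq hx.1
  rcases M.ax17 A hP hS hL hE hU with h | h
  · exact aux_down M x hx A h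
  · exact aux_up M x hx A h
end

section
/- If x ∈ P(M) satisfies x(L1) = r(L1) and x(L2) = r(L2) for two locked subsets L1, L2 ∈ ℒ with L1 ∩ L2 ≠ ∅, then there exists a set X ∈ 𝒫 ∪ ℒ with X ⊆ L1 ∩ L2 and x(X) = r(X). -/
open Finset

variable {α : Type*} [Fintype α] [DecidableEq α]

/- Auxiliary lemmas -/

omit [Fintype α] in
lemma partitionFam_disjoint {C : Finset (Finset α)} (hC : IsPartitionFam C)
    {A B : Finset α} (hA : A ∈ C) (hB : B ∈ C) (hne : A ≠ B) : A ∩ B = ∅ := by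
  by_contra h
  obtain ⟨e, he⟩ := Finset.nonempty_of_ne_empty h
  simp only [Finset.mem_inter] at he
  obtain ⟨U, -, hU⟩ := hC.2 e
  exact hne ((hU A ⟨hA, he.1⟩).trans (hU B ⟨hB, he.2⟩).symm)

omit [Fintype α] in
lemma sum_inter_union (x : α → ℝ) (A B : Finset α) :
    ∑ e ∈ A ∩ B, x e + ∑ e ∈ A ∪ B, x e = ∑ e ∈ A, x e + ∑ e ∈ B, x e := by
  have h1 : ∑ e ∈ A ∪ B, x e = ∑ e ∈ A, x e + ∑ e ∈ B \ A, x e := by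
    rw [← Finset.sum_union Finset.disjoint_sdiff]
    congr 1
    ext a
    simp only [Finset.mem_union, Finset.mem_sdiff]
    tauto
  have h2 : ∑ e ∈ B ∩ A, x e + ∑ e ∈ B \ A, x e = ∑ e ∈ B, x e :=
    Finset.sum_inter_add_sum_sdiff B A x
  rw [Finset.inter_comm] at h2
  linarith

lemma decompDown_le (M : LockedSystem α) (x : α → ℝ) (hx : x ∈ M.polytope)
    {X : Finset α} (hd : DecompDown M.P M.L M.r X) :
    (∀ p ∈ M.P, (p ∩ X).Nonempty → p ⊆ X) →
    (∑ e ∈ X, x e ≤ M.r X) ∧ (∑ e ∈ X, x e = M.r X → X.Nonempty →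
      ∃ Y ∈ M.P ∪ M.L, Y ⊆ X ∧ ∑ e ∈ Y, x e = M.r Y) := by
  induction hd with
  | empty =>
    intro _
    refine ⟨by simp [M.ax7.1], fun _ h => absurd h (by simp)⟩
  | viaLocked X l hl hss hr hd ih =>
    intro hH
    -- H for X \ l
    have hH' : ∀ p ∈ M.P, (p ∩ (X \ l)).Nonempty → p ⊆ X \ l := by
      intro p hp hnep
      have hpX : p ⊆ X := hH p hp (hnep.mono (by
        intro a ha; simp only [Finset.mem_inter, Finset.mem_sdiff] at ha ⊢
        exact ⟨ha.1, ha.2.1⟩))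
      rcases M.ax5 p (Finset.mem_union_left _ hp) l hl with hpl | hpl
      · intro a ha
        have haX := hpX ha
        have : a ∉ l := by
          intro hal
          have : a ∈ p ∩ l := Finset.mem_inter.2 ⟨ha, hal⟩
          simp [hpl] at this
        exact Finset.mem_sdiff.2 ⟨haX, this⟩
      · exfalso
        obtain ⟨a, ha⟩ := hnep
        simp only [Finset.mem_inter, Finset.mem_sdiff] at ha
        exact ha.2.2 (hpl ha.1)
    obtain ⟨ihle, iheq⟩ := ih hH'
    have hsplit : ∑ e ∈ X \ l, x e + ∑ e ∈ l, x e = ∑ e ∈ X, x e :=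
      Finset.sum_sdiff hss.subset
    have hlx : ∑ e ∈ l, x e ≤ M.r l := hx.2.2.2 l hl
    have hrc : (M.r X : ℝ) = M.r l + M.r (X \ l) := by exact_mod_cast hr
    constructor
    · linarith
    · intro heq _
      exact ⟨l, Finset.mem_union_right _ hl, hss.subset, by linarith⟩
  | viaParallel X p hp hnep hr hd ih =>
    intro hH
    have hpX : p ⊆ X := hH p hp hnep
    have hH' : ∀ q ∈ M.P, (q ∩ (X \ p)).Nonempty → q ⊆ X \ p := by
      intro q hq hneq
      have hqX : q ⊆ X := hH q hq (hneq.mono (by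
        intro a ha; simp only [Finset.mem_inter, Finset.mem_sdiff] at ha ⊢
        exact ⟨ha.1, ha.2.1⟩))
      have hqp : q ≠ p := by
        rintro rfl
        obtain ⟨a, ha⟩ := hneq
        simp only [Finset.mem_inter, Finset.mem_sdiff] at ha
        exact ha.2.2 ha.1
      have hdisj := partitionFam_disjoint M.ax2P hq hp hqp
      intro a ha
      refine Finset.mem_sdiff.2 ⟨hqX ha, fun hap => ?_⟩
      have : a ∈ q ∩ p := Finset.mem_inter.2 ⟨ha, hap⟩
      simp [hdisj] at this
    obtain ⟨ihle, iheq⟩ := ih hH'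
    have hsplit : ∑ e ∈ X \ p, x e + ∑ e ∈ p, x e = ∑ e ∈ X, x e :=
      Finset.sum_sdiff hpX
    have hpx : ∑ e ∈ p, x e ≤ 1 := hx.2.1 p hp
    have hrp : M.r p = 1 := M.ax8 p hp
    have hrc : (M.r X : ℝ) = M.r p + M.r (X \ p) := by exact_mod_cast hr
    constructor
    · rw [hrp] at hrc; push_cast at hrc; linarith
    · intro heq _
      refine ⟨p, Finset.mem_union_left _ hp, hpX, ?_⟩
      rw [hrp] at hrc ⊢; push_cast at hrc ⊢; linarith

lemma decompUp_le (M : LockedSystem α) (x : α → ℝ) (hx : x ∈ M.polytope)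
    {X : Finset α} (hd : DecompUp M.S M.L M.r X) :
    (∀ s ∈ M.S, (s ∩ X).Nonempty → s ⊆ X) → ∑ e ∈ X, x e ≤ M.r X := by
  have hxuniv : ∑ e ∈ Finset.univ, x e = M.r Finset.univ := hx.1
  induction hd with
  | full => intro _; exact le_of_eq hxuniv
  | viaLocked X l hl hss hr hd ih =>
    intro hH
    have hXl : X ∩ (Finset.univ \ l) = ∅ := by
      ext a
      simp only [Finset.mem_inter, Finset.mem_sdiff, Finset.mem_univ,
        Finset.notMem_empty, iff_false, not_and, true_and]
      intro haX hal
      exact hal (hss.subset haX)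
    have hH' : ∀ s ∈ M.S, (s ∩ (X ∪ Finset.univ \ l)).Nonempty →
        s ⊆ X ∪ Finset.univ \ l := by
      intro s hs hnes
      by_cases hsX : (s ∩ X).Nonempty
      · exact (hH s hs hsX).trans Finset.subset_union_left
      · rcases M.ax5 s (Finset.mem_union_right _ hs) l hl with hsl | hsl
        · intro a ha
          apply Finset.mem_union_right
          refine Finset.mem_sdiff.2 ⟨Finset.mem_univ a, fun hal => ?_⟩
          have : a ∈ s ∩ l := Finset.mem_inter.2 ⟨ha, hal⟩
          simp [hsl] at this
        · exfalso
          obtain ⟨a, ha⟩ := hnes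
          simp only [Finset.mem_inter, Finset.mem_union, Finset.mem_sdiff,
            Finset.mem_univ, true_and] at ha
          rcases ha.2 with h | h
          · exact hsX ⟨a, Finset.mem_inter.2 ⟨ha.1, h⟩⟩
          · exact h (hsl ha.1)
    have ihle := ih hH'
    have hsum1 : ∑ e ∈ X ∪ Finset.univ \ l, x e
        = ∑ e ∈ X, x e + ∑ e ∈ Finset.univ \ l, x e := by
      apply Finset.sum_union
      rw [Finset.disjoint_iff_inter_eq_empty]; exact hXl
    have hsum2 : ∑ e ∈ Finset.univ \ l, x e + ∑ e ∈ l, x e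
        = ∑ e ∈ Finset.univ, x e := Finset.sum_sdiff (Finset.subset_univ l)
    have hlx : ∑ e ∈ l, x e ≤ M.r l := hx.2.2.2 l hl
    have hrc : (M.r X : ℝ) + M.r Finset.univ
        = M.r l + M.r (X ∪ Finset.univ \ l) := by exact_mod_cast hr
    linarith
  | viaSeries X s hs hne hr hd ih =>
    intro hH
    have hsX : s ∩ X = ∅ := by
      rw [← Finset.not_nonempty_iff_eq_empty]
      intro hnes
      apply hne
      have hsub := hH s hs hnes
      ext a
      simp only [Finset.mem_union, Finset.mem_sdiff, Finset.mem_univ,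
        true_and, iff_true]
      by_cases has : a ∈ s
      · exact Or.inr (hsub has)
      · exact Or.inl has
    have hH' : ∀ t ∈ M.S, (t ∩ (X ∪ s)).Nonempty → t ⊆ X ∪ s := by
      intro t ht hnet
      by_cases htX : (t ∩ X).Nonempty
      · exact (hH t ht htX).trans Finset.subset_union_left
      · have hts : t = s := by
          by_contra hts
          have hdisj := partitionFam_disjoint M.ax2S ht hs hts
          obtain ⟨a, ha⟩ := hnet
          simp only [Finset.mem_inter, Finset.mem_union] at ha
          rcases ha.2 with h | h
          · exact htX ⟨a, Finset.mem_inter.2 ⟨ha.1, h⟩⟩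
          · have : a ∈ t ∩ s := Finset.mem_inter.2 ⟨ha.1, h⟩
            simp [hdisj] at this
        rw [hts]; exact Finset.subset_union_right
    have ihle := ih hH'
    have hsum1 : ∑ e ∈ X ∪ s, x e = ∑ e ∈ X, x e + ∑ e ∈ s, x e := by
      apply Finset.sum_union
      rw [Finset.disjoint_iff_inter_eq_empty, Finset.inter_comm]; exact hsX
    have hsum2 : ∑ e ∈ Finset.univ \ s, x e + ∑ e ∈ s, x e
        = ∑ e ∈ Finset.univ, x e := Finset.sum_sdiff (Finset.subset_univ s)
    have hsx : (s.card : ℝ) - 1 ≤ ∑ e ∈ s, x e := hx.2.2.1 s hs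
    have h11 : M.r (Finset.univ \ s) + s.card = M.r Finset.univ + 1 :=
      M.ax11 s hs
    have hcard0 : (s ∩ X).card = 0 := by rw [hsX]; simp
    rw [hcard0] at hr
    have hrc : (M.r X : ℝ) + M.r Finset.univ
        = M.r (Finset.univ \ s) + M.r (X ∪ s) := by exact_mod_cast hr
    have h11c : (M.r (Finset.univ \ s) : ℝ) + s.card
        = M.r Finset.univ + 1 := by exact_mod_cast h11
    linarith


/-- If `x ∈ P(M)` is tight on two locked subsets `L1, L2` with
`L1 ∩ L2 ≠ ∅`, then some `X ∈ 𝒫 ∪ ℒ` with `X ⊆ L1 ∩ L2` is tight. -/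
theorem tight_inter_contains_tight (M : LockedSystem α) (x : α → ℝ)
    (hx : x ∈ M.polytope) (L1 L2 : Finset α) (h1 : L1 ∈ M.L) (h2 : L2 ∈ M.L)
    (ht1 : ∑ e ∈ L1, x e = M.r L1) (ht2 : ∑ e ∈ L2, x e = M.r L2)
    (hne : (L1 ∩ L2).Nonempty) :
    ∃ X ∈ M.P ∪ M.L, X ⊆ L1 ∩ L2 ∧ ∑ e ∈ X, x e = M.r X := by
  set I := L1 ∩ L2 with hI
  set U := L1 ∪ L2 with hU
  -- x(U) ≤ r(U)
  have hHU : ∀ s ∈ M.S, (s ∩ U).Nonempty → s ⊆ U := by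
    intro s hs hnes
    obtain ⟨a, ha⟩ := hnes
    simp only [hU, Finset.mem_inter, Finset.mem_union] at ha
    rcases ha.2 with h | h
    · rcases M.ax5 s (Finset.mem_union_right _ hs) L1 h1 with hsl | hsl
      · exfalso
        have : a ∈ s ∩ L1 := Finset.mem_inter.2 ⟨ha.1, h⟩
        simp [hsl] at this
      · exact hsl.trans Finset.subset_union_left
    · rcases M.ax5 s (Finset.mem_union_right _ hs) L2 h2 with hsl | hsl
      · exfalso
        have : a ∈ s ∩ L2 := Finset.mem_inter.2 ⟨ha.1, h⟩
        simp [hsl] at this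
      · exact hsl.trans Finset.subset_union_right
  have hxU : ∑ e ∈ U, x e ≤ M.r U := by
    by_cases hUuniv : U = Finset.univ
    · rw [hUuniv]; exact le_of_eq hx.1
    by_cases hUL : U ∈ M.L
    · exact hx.2.2.2 U hUL
    · exact decompUp_le M x hx (M.ax19 L1 h1 L2 h2 hUuniv hUL) hHU
  -- submodularity
  have hmem1 : L1 ∈ M.P ∪ M.S ∪ M.L ∪ {∅, Finset.univ} := by
    apply Finset.mem_union_left
    exact Finset.mem_union_right _ h1
  have hmem2 : L2 ∈ M.P ∪ M.S ∪ M.L ∪ {∅, Finset.univ} := by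
    apply Finset.mem_union_left
    exact Finset.mem_union_right _ h2
  have hsubm := M.ax14 L1 hmem1 L2 hmem2
  have hsubmc : (M.r I : ℝ) + M.r U ≤ M.r L1 + M.r L2 := by
    exact_mod_cast hsubm
  have hsum : ∑ e ∈ I, x e + ∑ e ∈ U, x e = ∑ e ∈ L1, x e + ∑ e ∈ L2, x e :=
    sum_inter_union x L1 L2
  have hIge : (M.r I : ℝ) ≤ ∑ e ∈ I, x e := by linarith
  by_cases hIL : I ∈ M.L
  · have hIle : ∑ e ∈ I, x e ≤ M.r I := hx.2.2.2 I hIL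
    exact ⟨I, Finset.mem_union_right _ hIL, le_refl I, le_antisymm hIle hIge⟩
  · have hHI : ∀ p ∈ M.P, (p ∩ I).Nonempty → p ⊆ I := by
      intro p hp hnep
      obtain ⟨a, ha⟩ := hnep
      simp only [hI, Finset.mem_inter] at ha
      have hs1 : p ⊆ L1 := by
        rcases M.ax5 p (Finset.mem_union_left _ hp) L1 h1 with hpl | hpl
        · exfalso
          have : a ∈ p ∩ L1 := Finset.mem_inter.2 ⟨ha.1, ha.2.1⟩
          simp [hpl] at this
        · exact hpl
      have hs2 : p ⊆ L2 := by
        rcases M.ax5 p (Finset.mem_union_left _ hp) L2 h2 with hpl | hpl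
        · exfalso
          have : a ∈ p ∩ L2 := Finset.mem_inter.2 ⟨ha.1, ha.2.2⟩
          simp [hpl] at this
        · exact hpl
      exact Finset.subset_inter hs1 hs2
    obtain ⟨hle, heq⟩ :=
      decompDown_le M x hx (M.ax18 L1 h1 L2 h2 hne hIL) hHI
    exact heq (le_antisymm hle hIge) hne
end

section
/- The polytope P(M) of a locked system M is integral, i.e., all extreme points of P(M) have coordinates in {0,1}. -/
/-!
Bounds `0 ≤ x ≤ 1` follow from the partition constraints and (L3), and the axioms (L17) make
every rank inequality `x(X) ≤ r(X)` valid on `P(M)`. Call a constraint tight at `x` if it holds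
with equality (the equation `x(E) = r(E)` always is). If `x ∈ P(M)` has a fractional coordinate,
take an inclusion-minimal tight set `A` containing a fractional element. Its right-hand side is
an integer, so `A` contains two fractional elements `e ≠ f`; by minimality, submodularity (L14)
and (L18), every tight set meeting the fractional part of `A` contains `A`. Thus no tight
constraint separates `e` from `f`, and `x ± ε (χ_e - χ_f)` stay in `P(M)` for small `ε`, so `x`
is not extreme.
-/

open Finset

variable {α : Type*} [Fintype α] [DecidableEq α]

open Filter Topology

theorem IsPartitionFam.eq_of_mem {β : Type*} {C : Finset (Finset β)}
    (h : IsPartitionFam C) {A B : Finset β} {e : β} (hA : A ∈ C) (hB : B ∈ C) (heA : e ∈ A)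
    (heB : e ∈ B) : A = B :=
  (h.2 e).unique ⟨hA, heA⟩ ⟨hB, heB⟩

theorem eq_zero_of_mem_extremePoints_of_eventually_add_smul_mem {E : Type*} [AddCommGroup E]
    [Module ℝ E] {K : Set E} {x d : E} (hx : x ∈ K.extremePoints ℝ)
    (h : ∀ᶠ t in 𝓝 (0 : ℝ), x + t • d ∈ K) : d = 0 := by
  have hneg : ∀ᶠ t in 𝓝 (0 : ℝ), x + (-t) • d ∈ K :=
    (continuous_neg.tendsto' 0 0 neg_zero).eventually h
  obtain ⟨t, ⟨hplus, hminus⟩, ht⟩ :=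
    (((h.and hneg).filter_mono nhdsWithin_le_nhds).and
      (self_mem_nhdsWithin (s := {0}ᶜ))).exists
  have hseg : x ∈ openSegment ℝ (x + t • d) (x + (-t) • d) :=
    ⟨1 / 2, 1 / 2, by norm_num, by norm_num, by norm_num, by module⟩
  have htd : t • d = 0 := add_eq_left.1 (hx.2 hplus hminus hseg)
  exact (smul_eq_zero.1 htd).resolve_left ht

theorem eventually_add_mul_le {a b c : ℝ} (hab : a ≤ b) (hc : a = b → c = 0) :
    ∀ᶠ t in 𝓝 (0 : ℝ), a + t * c ≤ b := by
  rcases hab.eq_or_lt with rfl | hlt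
  · simp [hc rfl]
  · have hcont : ContinuousAt (fun t : ℝ => a + t * c) 0 := by fun_prop
    filter_upwards [hcont.eventually_lt continuousAt_const (by simpa using hlt)] with t ht
    exact ht.le

theorem sum_add_smul_apply {β : Type*} (A : Finset β) (x d : β → ℝ) (t : ℝ) :
    ∑ g ∈ A, (x + t • d) g = ∑ g ∈ A, x g + t * ∑ g ∈ A, d g := by
  simp [sum_add_distrib, mul_sum]

theorem sum_single_sub_single_eq_zero {β : Type*} [DecidableEq β] {A : Finset β} {e f : β}
    (h : e ∈ A ↔ f ∈ A) : ∑ g ∈ A, (Pi.single e 1 - Pi.single f 1 : β → ℝ) g = 0 := by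
  simp only [Pi.sub_apply, sum_sub_distrib, sum_pi_single', h, sub_self]

theorem exists_ne_of_sum_eq_intCast {β : Type*} {A : Finset β} {x : β → ℝ} {z : ℤ}
    (hA : ∑ g ∈ A, x g = z) {e : β} (he : e ∈ A) (hxe : x e ∉ Set.range Int.cast) :
    ∃ f ∈ A, f ≠ e ∧ x f ∉ Set.range Int.cast := by
  classical
  by_contra! hint
  choose! n hn using hint
  refine hxe ⟨z - ∑ f ∈ A.erase e, n f, ?_⟩
  rw [Int.cast_sub, Int.cast_sum, ← hA, ← add_sum_erase A x he,
    sum_congr rfl fun f hf => hn f (mem_of_mem_erase hf) (ne_of_mem_erase hf)]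
  ring

theorem eq_zero_or_eq_one_of_mem_range_intCast {t : ℝ} (ht : t ∈ Set.range Int.cast)
    (h0 : 0 ≤ t) (h1 : t ≤ 1) : t = 0 ∨ t = 1 := by
  obtain ⟨n, rfl⟩ := ht
  have : n = 0 ∨ n = 1 := by
    have : 0 ≤ n := by exact_mod_cast h0
    have : n ≤ 1 := by exact_mod_cast h1
    omega
  rcases this with rfl | rfl <;> simp

namespace LockedSystem

variable (M : LockedSystem α) {x : α → ℝ}

/-- `univ` stands for the equation `x(E) = r(E)`, which is always tight. -/
def IsTight (x : α → ℝ) (A : Finset α) : Prop :=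
  A = univ ∨ (A ∈ M.P ∧ ∑ g ∈ A, x g = 1) ∨ (A ∈ M.S ∧ ∑ g ∈ A, x g = A.card - 1) ∨
    (A ∈ M.L ∧ ∑ g ∈ A, x g = M.r A)

theorem singleton_mem_S_of_mem_P {p : Finset α} (hp : p ∈ M.P) (hcard : p.card ≠ 1) {f : α}
    (hf : f ∈ p) : {f} ∈ M.S := by
  obtain ⟨s, ⟨hs, hfs⟩, -⟩ := M.ax2S.2 f
  have hs1 := (M.ax3 p hp s hs ⟨f, mem_inter.2 ⟨hf, hfs⟩⟩).resolve_left hcard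
  obtain ⟨a, rfl⟩ := card_eq_one.1 hs1
  rwa [mem_singleton.1 hfs]

theorem singleton_mem_P_of_mem_S {s : Finset α} (hs : s ∈ M.S) (hcard : s.card ≠ 1) {f : α}
    (hf : f ∈ s) : {f} ∈ M.P := by
  obtain ⟨p, ⟨hp, hfp⟩, -⟩ := M.ax2P.2 f
  have hp1 := (M.ax3 p hp s hs ⟨f, mem_inter.2 ⟨hfp, hf⟩⟩).resolve_right hcard
  obtain ⟨a, rfl⟩ := card_eq_one.1 hp1
  rwa [mem_singleton.1 hfp]

theorem le_one_of_singleton_mem_P (hx : x ∈ M.polytope) {f : α} (hf : {f} ∈ M.P) : x f ≤ 1 := by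
  simpa using hx.2.1 {f} hf

theorem nonneg_of_singleton_mem_S (hx : x ∈ M.polytope) {f : α} (hf : {f} ∈ M.S) : 0 ≤ x f := by
  simpa using hx.2.2.1 {f} hf

theorem le_one_of_mem_polytope (hx : x ∈ M.polytope) (e : α) : x e ≤ 1 := by
  obtain ⟨p, ⟨hp, hep⟩, -⟩ := M.ax2P.2 e
  by_cases hcard : p.card = 1
  · obtain ⟨a, rfl⟩ := card_eq_one.1 hcard
    rw [← mem_singleton.1 hep] at hp
    exact M.le_one_of_singleton_mem_P hx hp
  calc x e ≤ ∑ g ∈ p, x g :=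
        single_le_sum (fun g hg => M.nonneg_of_singleton_mem_S hx
          (M.singleton_mem_S_of_mem_P hp hcard hg)) hep
    _ ≤ 1 := hx.2.1 p hp

theorem nonneg_of_mem_polytope (hx : x ∈ M.polytope) (e : α) : 0 ≤ x e := by
  obtain ⟨s, ⟨hs, hes⟩, -⟩ := M.ax2S.2 e
  by_cases hcard : s.card = 1
  · obtain ⟨a, rfl⟩ := card_eq_one.1 hcard
    rw [← mem_singleton.1 hes] at hs
    exact M.nonneg_of_singleton_mem_S hx hs
  have hrest : ∑ g ∈ s.erase e, x g ≤ s.card - 1 := by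
    calc ∑ g ∈ s.erase e, x g ≤ (s.erase e).card • (1 : ℝ) :=
          sum_le_card_nsmul _ _ _ fun g hg => M.le_one_of_singleton_mem_P hx
            (M.singleton_mem_P_of_mem_S hs hcard (mem_of_mem_erase hg))
      _ = s.card - 1 := by
          rw [card_erase_of_mem hes, nsmul_one, Nat.cast_pred (card_pos.2 ⟨e, hes⟩)]
  have hsum := add_sum_erase s x hes
  linarith [hx.2.2.1 s hs]

theorem sum_le_card (hx : x ∈ M.polytope) (A : Finset α) : ∑ g ∈ A, x g ≤ A.card :=
  (sum_le_card_nsmul A x 1 fun g _ => M.le_one_of_mem_polytope hx g).trans (by simp)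

theorem sum_le_rank_of_decompDown (hx : x ∈ M.polytope) {X : Finset α}
    (hX : DecompDown M.P M.L M.r X) : ∑ g ∈ X, x g ≤ M.r X := by
  induction hX with
  | empty => simp [M.ax7.1]
  | viaLocked X l hl hlX hr _ ih =>
    rw [← sum_sdiff hlX.subset, hr]
    push_cast
    linarith [hx.2.2.2 l hl]
  | viaParallel X p hp _ hr _ ih =>
    have hXp : ∑ g ∈ X ∩ p, x g ≤ 1 :=
      (sum_le_sum_of_subset_of_nonneg inter_subset_right fun g _ _ =>
        M.nonneg_of_mem_polytope hx g).trans (hx.2.1 p hp)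
    rw [← sum_inter_add_sum_sdiff X p, hr, M.ax8 p hp]
    push_cast
    linarith

theorem sum_le_rank_of_decompUp (hx : x ∈ M.polytope) {X : Finset α}
    (hX : DecompUp M.S M.L M.r X) : ∑ g ∈ X, x g ≤ M.r X := by
  induction hX with
  | full => exact hx.1.le
  | viaLocked X l hl hXl hr _ ih =>
    have hcast : (M.r X : ℝ) + M.r univ = M.r l + M.r (X ∪ (univ \ l)) := by
      exact_mod_cast hr
    rw [sum_union (disjoint_sdiff.mono_left hXl.subset)] at ih
    have hcompl := sum_sdiff (f := x) (subset_univ l)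
    linarith [hx.1, hx.2.2.2 l hl]
  | viaSeries X s hs _ hr _ ih =>
    have hcast :
        (M.r X : ℝ) + M.r univ = M.r (univ \ s) + M.r (X ∪ s) + (s ∩ X).card := by
      exact_mod_cast hr
    have hser : (M.r (univ \ s) : ℝ) + s.card = M.r univ + 1 := by exact_mod_cast M.ax11 s hs
    have hsum := sum_union_inter (f := x) (s₁ := s) (s₂ := X)
    rw [union_comm] at hsum
    linarith [hx.2.2.1 s hs, M.sum_le_card hx (s ∩ X)]

theorem sum_le_rank (hx : x ∈ M.polytope) (X : Finset α) : ∑ g ∈ X, x g ≤ M.r X := by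
  by_cases hP : X ∈ M.P
  · rw [M.ax8 X hP]
    exact_mod_cast hx.2.1 X hP
  by_cases hS : X ∈ M.S
  · rw [M.ax10 X hS]
    exact M.sum_le_card hx X
  by_cases hL : X ∈ M.L
  · exact hx.2.2.2 X hL
  by_cases hE : X = ∅
  · simp [hE, M.ax7.1]
  by_cases hU : X = univ
  · rw [hU]
    exact hx.1.le
  exact (M.ax17 X hP hS hL hE hU).elim (M.sum_le_rank_of_decompDown hx)
    (M.sum_le_rank_of_decompUp hx)

theorem exists_isTight_of_decompDown (hx : x ∈ M.polytope) {X : Finset α}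
    (hX : DecompDown M.P M.L M.r X) (htight : ∑ g ∈ X, x g = M.r X) {a : α} (ha : a ∈ X) :
    ∃ C, M.IsTight x C ∧ a ∈ C ∧ (C ∈ M.P ∨ C ∈ M.L ∧ C ⊆ X) := by
  induction hX with
  | empty => simp at ha
  | viaLocked X l hl hlX hr hrest ih =>
    have hsplit := sum_sdiff (f := x) hlX.subset
    have hcast : (M.r X : ℝ) = M.r l + M.r (X \ l) := by exact_mod_cast hr
    have hl_le := hx.2.2.2 l hl
    have hrest_le := M.sum_le_rank_of_decompDown hx hrest
    by_cases hal : a ∈ l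
    · exact ⟨l, Or.inr (Or.inr (Or.inr ⟨hl, by linarith⟩)), hal, Or.inr ⟨hl, hlX.subset⟩⟩
    obtain ⟨C, hC, haC, hCX⟩ := ih (by linarith) (mem_sdiff.2 ⟨ha, hal⟩)
    exact ⟨C, hC, haC, hCX.imp_right fun h => ⟨h.1, h.2.trans sdiff_subset⟩⟩
  | viaParallel X p hp _ hr hrest ih =>
    have hsplit := sum_inter_add_sum_sdiff X p x
    have hcast : (M.r X : ℝ) = 1 + M.r (X \ p) := by exact_mod_cast M.ax8 p hp ▸ hr
    have hXp_le : ∑ g ∈ X ∩ p, x g ≤ ∑ g ∈ p, x g :=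
      sum_le_sum_of_subset_of_nonneg inter_subset_right fun g _ _ =>
        M.nonneg_of_mem_polytope hx g
    have hp_le := hx.2.1 p hp
    have hrest_le := M.sum_le_rank_of_decompDown hx hrest
    by_cases hap : a ∈ p
    · exact ⟨p, Or.inr (Or.inl ⟨hp, by linarith⟩), hap, Or.inl hp⟩
    obtain ⟨C, hC, haC, hCX⟩ := ih (by linarith) (mem_sdiff.2 ⟨ha, hap⟩)
    exact ⟨C, hC, haC, hCX.imp_right fun h => ⟨h.1, h.2.trans sdiff_subset⟩⟩

theorem exists_sum_eq_intCast_of_isTight (hx : x ∈ M.polytope) {A : Finset α}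
    (hA : M.IsTight x A) : ∃ z : ℤ, ∑ g ∈ A, x g = z := by
  rcases hA with rfl | ⟨-, h⟩ | ⟨-, h⟩ | ⟨-, h⟩
  · exact ⟨M.r univ, by rw [hx.1]; simp⟩
  · exact ⟨1, by simp [h]⟩
  · exact ⟨A.card - 1, by simp [h]⟩
  · exact ⟨M.r A, by simp [h]⟩

theorem ssubset_of_mem_L {X l : Finset α} (hX : X ∈ M.P ∪ M.S) (hl : l ∈ M.L) {a : α}
    (haX : a ∈ X) (hal : a ∈ l) : X ⊂ l := by
  have hsub : X ⊆ l :=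
    (M.ax5 X hX l hl).resolve_left (ne_empty_of_mem (mem_inter.2 ⟨haX, hal⟩))
  refine ssubset_of_subset_of_ne hsub ?_
  rintro rfl
  obtain ⟨-, -, hP, hS⟩ := M.ax4 X hl
  exact (mem_union.1 hX).elim hP hS

theorem subset_of_isTight_of_mem_P {A B : Finset α} (hAP : A ∈ M.P)
    (hB : M.IsTight x B) {a : α} (haA : a ∈ A) (haB : a ∈ B)
    (hfrac : x a ∉ Set.range Int.cast) : A ⊆ B := by
  rcases hB with rfl | ⟨hBP, -⟩ | ⟨hBS, hBt⟩ | ⟨hBL, -⟩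
  · exact subset_univ A
  · exact (M.ax2P.eq_of_mem hAP hBP haA haB).le
  · rcases M.ax3 A hAP B hBS ⟨a, mem_inter.2 ⟨haA, haB⟩⟩ with h | h
    · obtain ⟨b, rfl⟩ := card_eq_one.1 h
      rwa [singleton_subset_iff, ← mem_singleton.1 haA]
    · obtain ⟨b, rfl⟩ := card_eq_one.1 h
      rw [mem_singleton.1 haB] at hfrac
      exact absurd ⟨0, by simpa using hBt.symm⟩ hfrac
  · exact (M.ssubset_of_mem_L (mem_union_left _ hAP) hBL haA haB).subset

theorem subset_of_isTight_of_mem_S {A B : Finset α} (hAS : A ∈ M.S)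
    (hB : M.IsTight x B) {a : α} (haA : a ∈ A) (haB : a ∈ B)
    (hfrac : x a ∉ Set.range Int.cast) : A ⊆ B := by
  rcases hB with rfl | ⟨hBP, hBt⟩ | ⟨hBS, -⟩ | ⟨hBL, -⟩
  · exact subset_univ A
  · rcases M.ax3 B hBP A hAS ⟨a, mem_inter.2 ⟨haB, haA⟩⟩ with h | h
    · obtain ⟨b, rfl⟩ := card_eq_one.1 h
      rw [mem_singleton.1 haB] at hfrac
      exact absurd ⟨1, by simpa using hBt.symm⟩ hfrac
    · obtain ⟨b, rfl⟩ := card_eq_one.1 h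
      rwa [singleton_subset_iff, ← mem_singleton.1 haA]
  · exact (M.ax2S.eq_of_mem hAS hBS haA haB).le
  · exact (M.ssubset_of_mem_L (mem_union_right _ hAS) hBL haA haB).subset

theorem subset_or_exists_isTight_ssubset_of_mem_L_of_mem_L (hx : x ∈ M.polytope)
    {A B : Finset α} (hAL : A ∈ M.L) (hBL : B ∈ M.L) (hAt : ∑ g ∈ A, x g = M.r A)
    (hBt : ∑ g ∈ B, x g = M.r B) {a : α} (ha : a ∈ A ∩ B) :
    A ⊆ B ∨ ∃ C, M.IsTight x C ∧ a ∈ C ∧ C ⊂ A := by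
  by_cases hAB : A ⊆ B
  · exact Or.inl hAB
  right
  have hssub : A ∩ B ⊂ A :=
    ssubset_of_subset_of_ne inter_subset_left fun h => hAB (inter_eq_left.1 h)
  have hmem : ∀ l ∈ M.L, l ∈ M.P ∪ M.S ∪ M.L ∪ {∅, univ} := fun l hl =>
    mem_union_left _ (mem_union_right _ hl)
  have hsubmod : (M.r (A ∩ B) : ℝ) + M.r (A ∪ B) ≤ M.r A + M.r B := by
    exact_mod_cast M.ax14 A (hmem A hAL) B (hmem B hBL)
  have htight : ∑ g ∈ A ∩ B, x g = M.r (A ∩ B) := by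
    linarith [M.sum_le_rank hx (A ∩ B), M.sum_le_rank hx (A ∪ B),
      sum_union_inter (f := x) (s₁ := A) (s₂ := B)]
  by_cases hIL : A ∩ B ∈ M.L
  · exact ⟨A ∩ B, Or.inr (Or.inr (Or.inr ⟨hIL, htight⟩)), ha, hssub⟩
  obtain ⟨C, hC, haC, hCP | ⟨-, hCsub⟩⟩ :=
    M.exists_isTight_of_decompDown hx (M.ax18 A hAL B hBL ⟨a, ha⟩ hIL) htight ha
  · exact ⟨C, hC, haC,
      M.ssubset_of_mem_L (mem_union_left _ hCP) hAL haC (mem_inter.1 ha).1⟩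
  · exact ⟨C, hC, haC, hCsub.trans_ssubset hssub⟩

theorem subset_or_exists_isTight_ssubset (hx : x ∈ M.polytope) {A B : Finset α}
    (hA : M.IsTight x A) (hB : M.IsTight x B) {a : α} (haA : a ∈ A) (haB : a ∈ B)
    (hfrac : x a ∉ Set.range Int.cast) : A ⊆ B ∨ ∃ C, M.IsTight x C ∧ a ∈ C ∧ C ⊂ A := by
  rcases hA with rfl | ⟨hAP, -⟩ | ⟨hAS, -⟩ | ⟨hAL, hAt⟩
  · exact (subset_univ B).eq_or_ssubset.imp ge_of_eq fun h => ⟨B, hB, haB, h⟩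
  · exact Or.inl (M.subset_of_isTight_of_mem_P hAP hB haA haB hfrac)
  · exact Or.inl (M.subset_of_isTight_of_mem_S hAS hB haA haB hfrac)
  rcases id hB with rfl | ⟨hBP, -⟩ | ⟨hBS, -⟩ | ⟨hBL, hBt⟩
  · exact Or.inl (subset_univ A)
  · exact Or.inr ⟨B, hB, haB, M.ssubset_of_mem_L (mem_union_left _ hBP) hAL haB haA⟩
  · exact Or.inr ⟨B, hB, haB, M.ssubset_of_mem_L (mem_union_right _ hBS) hAL haB haA⟩
  · exact M.subset_or_exists_isTight_ssubset_of_mem_L_of_mem_L hx hAL hBL hAt hBt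
      (mem_inter.2 ⟨haA, haB⟩)

theorem exists_ne_forall_isTight_mem_iff (hx : x ∈ M.polytope) {A : Finset α}
    (hA : M.IsTight x A) {a : α} (ha : a ∈ A) (hfrac : x a ∉ Set.range Int.cast) :
    ∃ e f, e ≠ f ∧ ∀ B, M.IsTight x B → (e ∈ B ↔ f ∈ B) := by
  induction A using Finset.strongInduction generalizing a with
  | H A ih =>
  by_cases hmin : ∃ B, M.IsTight x B ∧ ∃ b ∈ A, x b ∉ Set.range Int.cast ∧ b ∈ B ∧ ¬A ⊆ B
  · obtain ⟨B, hB, b, hbA, hb, hbB, hAB⟩ := hmin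
    obtain ⟨C, hC, hbC, hCA⟩ :=
      (M.subset_or_exists_isTight_ssubset hx hA hB hbA hbB hb).resolve_left hAB
    exact ih C hCA hC hbC hb
  push Not at hmin
  obtain ⟨z, hz⟩ := M.exists_sum_eq_intCast_of_isTight hx hA
  obtain ⟨f, hfA, hfa, hf⟩ := exists_ne_of_sum_eq_intCast hz ha hfrac
  exact ⟨a, f, hfa.symm, fun B hB =>
    ⟨fun h => hmin B hB a ha hfrac h hfA, fun h => hmin B hB f hfA hf h ha⟩⟩

theorem eventually_add_smul_mem_polytope (hx : x ∈ M.polytope) {d : α → ℝ}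
    (hd : ∀ A, M.IsTight x A → ∑ g ∈ A, d g = 0) :
    ∀ᶠ t in 𝓝 (0 : ℝ), x + t • d ∈ M.polytope := by
  obtain ⟨hE, hP, hS, hL⟩ := hx
  have hP' : ∀ᶠ t in 𝓝 (0 : ℝ), ∀ p ∈ M.P, ∑ g ∈ p, (x + t • d) g ≤ 1 := by
    refine (eventually_all_finset _).2 fun p hp => ?_
    simp_rw [sum_add_smul_apply]
    exact eventually_add_mul_le (hP p hp) fun h => hd p (Or.inr (Or.inl ⟨hp, h⟩))
  have hS' : ∀ᶠ t in 𝓝 (0 : ℝ), ∀ s ∈ M.S, (s.card : ℝ) - 1 ≤ ∑ g ∈ s, (x + t • d) g := by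
    refine (eventually_all_finset _).2 fun s hs => ?_
    have hneg := eventually_add_mul_le (c := -∑ g ∈ s, d g) (neg_le_neg (hS s hs))
      fun h => by rw [hd s (Or.inr (Or.inr (Or.inl ⟨hs, neg_inj.1 h⟩))), neg_zero]
    filter_upwards [hneg] with t ht
    rw [sum_add_smul_apply]
    linarith
  have hL' : ∀ᶠ t in 𝓝 (0 : ℝ), ∀ l ∈ M.L, ∑ g ∈ l, (x + t • d) g ≤ M.r l := by
    refine (eventually_all_finset _).2 fun l hl => ?_
    simp_rw [sum_add_smul_apply]
    exact eventually_add_mul_le (hL l hl) fun h => hd l (Or.inr (Or.inr (Or.inr ⟨hl, h⟩)))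
  filter_upwards [hP', hS', hL'] with t hPt hSt hLt
  refine ⟨?_, hPt, hSt, hLt⟩
  rw [sum_add_smul_apply, hd univ (Or.inl rfl), mul_zero, add_zero, hE]

end LockedSystem

/-- The polytope `P(M)` of a locked system is integral: every extreme point
has all coordinates in `{0, 1}`. -/
theorem polytope_integral (M : LockedSystem α) (x : α → ℝ)
    (hx : x ∈ Set.extremePoints ℝ M.polytope) :
    ∀ e : α, x e = 0 ∨ x e = 1 := by
  intro e
  refine eq_zero_or_eq_one_of_mem_range_intCast ?_ (M.nonneg_of_mem_polytope hx.1 e)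
    (M.le_one_of_mem_polytope hx.1 e)
  by_contra hfrac
  obtain ⟨f, g, hfg, hsep⟩ :=
    M.exists_ne_forall_isTight_mem_iff hx.1 (Or.inl rfl) (mem_univ e) hfrac
  have hd := eq_zero_of_mem_extremePoints_of_eventually_add_smul_mem hx
    (M.eventually_add_smul_mem_polytope hx.1 fun A hA =>
      sum_single_sub_single_eq_zero (hsep A hA))
  simpa [hfg] using congrFun hd f
end

section
/- In any locked system, distinct coparallel classes of size at least 2 give disjoint constraints: if an extreme point x of P(M) violates upon exchange the same coparallel constraint for two different entering elements f1 ≠ f2, then both f1 and f2 lie in E\S, which is impossible when S contains the leaving element e, yielding the exchange property for constraints of type x(S) ≥ |S| − 1. Formally: if B, B' are two 0-1 extreme points of P(M), e ∈ B\B', and for every f ∈ B'\B the vector B − e + f violates some constraint x(S_f) ≥ |S_f| − 1 with S_f ∈ 𝒮, then the S_f coincide for all f, and a contradiction follows; hence not all exchanges can fail via type-(3) constraints. -/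
open Finset

variable {α : Type*} [Fintype α] [DecidableEq α]

/-- The 0-1 characteristic vector of a subset `B`. -/
def indicatorVec (B : Finset α) : α → ℝ := fun e => if e ∈ B then 1 else 0

lemma sum_indicatorVec (s B : Finset α) :
    ∑ g ∈ s, indicatorVec B g = ((s ∩ B).card : ℝ) := by
  simp [indicatorVec, Finset.sum_ite_mem]

/-- Exchanges between two 0-1 extreme points of `P(M)` cannot all fail via
the coparallel constraints `x(S) ≥ |S| − 1`: if `B, B'` are 0-1 extreme
points of `P(M)`, `e ∈ B \ B'`, and for every `f ∈ B' \ B` the vector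
`B − e + f` violates some constraint of type (3), a contradiction follows. -/
theorem not_all_exchanges_fail_series (M : LockedSystem α) (B B' : Finset α)
    (hB : indicatorVec B ∈ Set.extremePoints ℝ M.polytope)
    (hB' : indicatorVec B' ∈ Set.extremePoints ℝ M.polytope)
    (e : α) (he : e ∈ B \ B')
    (hfail : ∀ f ∈ B' \ B, ∃ s ∈ M.S,
      ∑ g ∈ s, indicatorVec (insert f (B.erase e)) g < (s.card : ℝ) - 1) :
    False := by
  have hBm := hB.1
  have hB'm := hB'.1
  obtain ⟨hBsum, -, hBS, -⟩ := hBm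
  obtain ⟨hB'sum, -, hB'S, -⟩ := hB'm
  rw [show (∑ x, indicatorVec B x) = ∑ g ∈ Finset.univ, indicatorVec B g from rfl,
    sum_indicatorVec, Finset.univ_inter] at hBsum
  rw [show (∑ x, indicatorVec B' x) = ∑ g ∈ Finset.univ, indicatorVec B' g from rfl,
    sum_indicatorVec, Finset.univ_inter] at hB'sum
  have hcard : B.card = B'.card := by
    have h : (B.card : ℝ) = B'.card := by rw [hBsum, hB'sum]
    exact_mod_cast h
  rw [Finset.mem_sdiff] at he
  obtain ⟨heB, heB'⟩ := he
  have hne : (B' \ B).Nonempty := by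
    rw [← Finset.card_pos, Finset.card_sdiff_comm hcard.symm, Finset.card_pos]
    exact ⟨e, Finset.mem_sdiff.2 ⟨heB, heB'⟩⟩
  have key : ∀ f ∈ B' \ B, ∃ s ∈ M.S, e ∈ s ∧ f ∉ s ∧ (s ∩ B).card < s.card := by
    intro f hf
    have hfB : f ∉ B := (Finset.mem_sdiff.1 hf).2
    obtain ⟨s, hsS, hv⟩ := hfail f hf
    rw [sum_indicatorVec] at hv
    have hBs := hBS s hsS
    rw [sum_indicatorVec] at hBs
    have hes : e ∈ s := by
      by_contra hes
      have hsub : s ∩ B ⊆ s ∩ insert f (B.erase e) := by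
        intro g hg
        rw [Finset.mem_inter] at hg ⊢
        refine ⟨hg.1, Finset.mem_insert.2 (Or.inr (Finset.mem_erase.2 ⟨?_, hg.2⟩))⟩
        rintro rfl; exact hes hg.1
      have h1 := Finset.card_le_card hsub
      have h2 : ((s ∩ B).card : ℝ) ≤ ((s ∩ insert f (B.erase e)).card : ℝ) := by
        exact_mod_cast h1
      linarith
    have heB2 : e ∈ s ∩ B := Finset.mem_inter.2 ⟨hes, heB⟩
    have hcpos : 1 ≤ (s ∩ B).card := Finset.card_pos.2 ⟨e, heB2⟩
    have hfs : f ∉ s := by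
      by_contra hfs
      have heq : s ∩ insert f (B.erase e) = insert f ((s ∩ B).erase e) := by
        ext g
        simp only [Finset.mem_inter, Finset.mem_insert, Finset.mem_erase]
        constructor
        · rintro ⟨hg, (rfl | ⟨hgne, hgB⟩)⟩
          · exact Or.inl rfl
          · exact Or.inr ⟨hgne, hg, hgB⟩
        · rintro (rfl | ⟨hgne, hg, hgB⟩)
          · exact ⟨hfs, Or.inl rfl⟩
          · exact ⟨hg, Or.inr ⟨hgne, hgB⟩⟩
      have hfne : f ∉ (s ∩ B).erase e := fun h =>
        hfB (Finset.mem_inter.1 (Finset.mem_of_mem_erase h)).2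
      have hc : (s ∩ insert f (B.erase e)).card = (s ∩ B).card := by
        rw [heq, Finset.card_insert_of_notMem hfne, Finset.card_erase_of_mem heB2]
        omega
      rw [hc] at hv
      linarith
    have heq : s ∩ insert f (B.erase e) = (s ∩ B).erase e := by
      ext g
      simp only [Finset.mem_inter, Finset.mem_insert, Finset.mem_erase]
      constructor
      · rintro ⟨hg, (rfl | ⟨hgne, hgB⟩)⟩
        · exact absurd hg hfs
        · exact ⟨hgne, hg, hgB⟩
      · rintro ⟨hgne, hg, hgB⟩
        exact ⟨hg, Or.inr ⟨hgne, hgB⟩⟩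
    have hc : (s ∩ insert f (B.erase e)).card + 1 = (s ∩ B).card := by
      rw [heq, Finset.card_erase_of_mem heB2]
      omega
    refine ⟨s, hsS, hes, hfs, ?_⟩
    have h3 : ((s ∩ B).card : ℝ) < s.card := by
      have h4 : ((s ∩ insert f (B.erase e)).card : ℝ) + 1 = (s ∩ B).card := by
        exact_mod_cast hc
      linarith
    exact_mod_cast h3
  obtain ⟨f0, hf0⟩ := hne
  obtain ⟨Se, hSe, heSe, -, hSecard⟩ := key f0 hf0
  obtain ⟨-, huniq⟩ := M.ax2S
  have havoid : ∀ f ∈ B' \ B, f ∉ Se := by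
    intro f hf
    obtain ⟨s, hsS, hes, hfs, -⟩ := key f hf
    obtain ⟨A, -, hA⟩ := huniq e
    have h1 : s = A := hA s ⟨hsS, hes⟩
    have h2 : Se = A := hA Se ⟨hSe, heSe⟩
    rw [h1] at hfs; rw [h2]; exact hfs
  have hB'c := hB'S Se hSe
  rw [sum_indicatorVec] at hB'c
  have hsub : Se ∩ B' ⊆ (Se ∩ B).erase e := by
    intro g hg
    rw [Finset.mem_inter] at hg
    rw [Finset.mem_erase, Finset.mem_inter]
    have hgB : g ∈ B := by
      by_contra hgB
      exact havoid g (Finset.mem_sdiff.2 ⟨hg.2, hgB⟩) hg.1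
    refine ⟨?_, hg.1, hgB⟩
    rintro rfl; exact heB' hg.2
  have h5 : (Se ∩ B').card < (Se ∩ B).card :=
    lt_of_le_of_lt (Finset.card_le_card hsub)
      (Finset.card_erase_lt_of_mem (Finset.mem_inter.2 ⟨heSe, heB⟩))
  have h6 : (Se.card : ℝ) ≤ (Se ∩ B').card + 1 := by linarith
  have h7 : Se.card ≤ (Se ∩ B').card + 1 := by exact_mod_cast h6
  omega
end
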